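/- arXiv:2006.08104 — 7 statements merged into one kernel-verified Lean document; each statement's English description precedes it below -/
import Mathlib

section
/- Let K ⊆ ℝ^q be a closed convex cone with dual cone K*. Suppose A ∈ ℝ^{m×q}, B ∈ ℝ^{l×q}, M ∈ ℝ^{r×q} satisfy that the range spaces R(Aᵀ), R(Bᵀ), R(Mᵀ) are pairwise orthogonal and their direct sum is ℝ^q. If b = Ad and a = Bc, then for any x with Ax = b, x ∈ K, and any y with By = a, My = Mc, y ∈ K*, the inequality ⟨c, x⟩ ≥ ⟨d, c − y⟩ holds. -/
open Matrix

lemma aux_orth {m l q : ℕ} (A : Matrix (Fin m) (Fin q) ℝ) (B : Matrix (Fin l) (Fin q) ℝ)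
    (h : ∀ (w : Fin m → ℝ) (z : Fin l → ℝ), (Aᵀ *ᵥ w) ⬝ᵥ (Bᵀ *ᵥ z) = 0)
    (z : Fin l → ℝ) : A *ᵥ (Bᵀ *ᵥ z) = 0 := by
  funext i
  have h2 := h (Pi.single i 1) z
  rwa [mulVec_transpose, ← dotProduct_mulVec, single_dotProduct, one_mul] at h2

lemma aux_ker {m q : ℕ} (A : Matrix (Fin m) (Fin q) ℝ) (u : Fin m → ℝ)
    (h : A *ᵥ (Aᵀ *ᵥ u) = 0) : Aᵀ *ᵥ u = 0 := by
  have h2 : (Aᵀ *ᵥ u) ⬝ᵥ (Aᵀ *ᵥ u) = 0 := by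
    nth_rewrite 1 [mulVec_transpose]
    rw [← dotProduct_mulVec, h, dotProduct_zero]
  exact (dotProduct_self_eq_zero).mp h2

/-- Weak duality for the nonstandard dual pair. -/
theorem stmt_0
{q m l r : ℕ}
    (K : Set (Fin q → ℝ))
    (hKclosed : IsClosed K) (hKconv : Convex ℝ K)
    (hKcone : ∀ (t : ℝ), 0 ≤ t → ∀ x ∈ K, t • x ∈ K)
    (A : Matrix (Fin m) (Fin q) ℝ)
    (B : Matrix (Fin l) (Fin q) ℝ)
    (M : Matrix (Fin r) (Fin q) ℝ)
(hAB : ∀ (w : Fin m → ℝ) (z : Fin l → ℝ), (Aᵀ *ᵥ w) ⬝ᵥ (Bᵀ *ᵥ z) = 0)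
    (hAM : ∀ (w : Fin m → ℝ) (z : Fin r → ℝ), (Aᵀ *ᵥ w) ⬝ᵥ (Mᵀ *ᵥ z) = 0)
    (hBM : ∀ (w : Fin l → ℝ) (z : Fin r → ℝ), (Bᵀ *ᵥ w) ⬝ᵥ (Mᵀ *ᵥ z) = 0)
    (hspan : ∀ x : Fin q → ℝ, ∃ (w₁ : Fin m → ℝ) (w₂ : Fin l → ℝ) (w₃ : Fin r → ℝ),
      x = Aᵀ *ᵥ w₁ + Bᵀ *ᵥ w₂ + Mᵀ *ᵥ w₃)
    (c d : Fin q → ℝ) (a : Fin l → ℝ) (b : Fin m → ℝ)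
    (hb : b = A *ᵥ d) (ha : a = B *ᵥ c)
    (x y : Fin q → ℝ)
    (hx1 : A *ᵥ x = b) (hx2 : x ∈ K)
    (hy1 : B *ᵥ y = a) (hy2 : M *ᵥ y = M *ᵥ c)
    (hy3 : y ∈ {y : Fin q → ℝ | ∀ z ∈ K, 0 ≤ y ⬝ᵥ z}) :
    d ⬝ᵥ (c - y) ≤ c ⬝ᵥ x := by
  have hBA : ∀ (w : Fin l → ℝ) (z : Fin m → ℝ), (Bᵀ *ᵥ w) ⬝ᵥ (Aᵀ *ᵥ z) = 0 :=
    fun w z => by rw [dotProduct_comm]; exact hAB z w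
  have hMA : ∀ (w : Fin r → ℝ) (z : Fin m → ℝ), (Mᵀ *ᵥ w) ⬝ᵥ (Aᵀ *ᵥ z) = 0 :=
    fun w z => by rw [dotProduct_comm]; exact hAM z w
  have hMB : ∀ (w : Fin r → ℝ) (z : Fin l → ℝ), (Mᵀ *ᵥ w) ⬝ᵥ (Bᵀ *ᵥ z) = 0 :=
    fun w z => by rw [dotProduct_comm]; exact hBM z w
  have hAB0 := aux_orth A B hAB
  have hAM0 := aux_orth A M hAM
  have hBA0 := aux_orth B A hBA
  have hBM0 := aux_orth B M hBM
  have hMA0 := aux_orth M A hMA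
  have hMB0 := aux_orth M B hMB
  obtain ⟨u₁, u₂, u₃, hxd⟩ := hspan x
  obtain ⟨v₁, v₂, v₃, hyd⟩ := hspan y
  obtain ⟨p₁, p₂, p₃, hcd⟩ := hspan c
  obtain ⟨q₁, q₂, q₃, hdd⟩ := hspan d
  have hAx : A *ᵥ x = A *ᵥ d := hx1.trans hb
  have hBy : B *ᵥ y = B *ᵥ c := hy1.trans ha
  have e1 : Aᵀ *ᵥ u₁ = Aᵀ *ᵥ q₁ := by
    rw [hxd, hdd] at hAx
    simp only [mulVec_add, hAB0, hAM0, add_zero] at hAx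
    have : A *ᵥ (Aᵀ *ᵥ (u₁ - q₁)) = 0 := by
      rw [mulVec_sub, mulVec_sub, hAx, sub_self]
    have := aux_ker A _ this
    rw [mulVec_sub] at this
    exact sub_eq_zero.mp this
  have e2 : Bᵀ *ᵥ v₂ = Bᵀ *ᵥ p₂ := by
    rw [hyd, hcd] at hBy
    simp only [mulVec_add, hBA0, hBM0, add_zero, zero_add] at hBy
    have h0 : B *ᵥ (Bᵀ *ᵥ (v₂ - p₂)) = 0 := by
      rw [mulVec_sub, mulVec_sub, hBy, sub_self]
    have h1 := aux_ker B _ h0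
    rw [mulVec_sub] at h1
    exact sub_eq_zero.mp h1
  have e3 : Mᵀ *ᵥ v₃ = Mᵀ *ᵥ p₃ := by
    rw [hyd, hcd] at hy2
    simp only [mulVec_add, hMA0, hMB0, add_zero, zero_add] at hy2
    have h0 : M *ᵥ (Mᵀ *ᵥ (v₃ - p₃)) = 0 := by
      rw [mulVec_sub, mulVec_sub, hy2, sub_self]
    have h1 := aux_ker M _ h0
    rw [mulVec_sub] at h1
    exact sub_eq_zero.mp h1
  have hyx : 0 ≤ y ⬝ᵥ x := hy3 x hx2
  have key : d ⬝ᵥ (c - y) = c ⬝ᵥ x - y ⬝ᵥ x := by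
    rw [hxd, hyd, hcd, hdd, e1, e2, e3]
    simp only [dotProduct_sub, dotProduct_add, add_dotProduct, sub_dotProduct,
      hAB, hAM, hBM, hBA, hMA, hMB, add_zero, zero_add]
    rw [dotProduct_comm (Aᵀ *ᵥ q₁) (Aᵀ *ᵥ p₁), dotProduct_comm (Aᵀ *ᵥ q₁) (Aᵀ *ᵥ v₁)]
    ring
  linarith
end

section
/- Under Assumption 1 (the ranges of Aᵀ, Bᵀ, Mᵀ are mutually orthogonal with direct sum ℝ^q), a vector y ∈ K* satisfies By = Bc and My = Mc if and only if there exists w ∈ ℝ^m such that y = c − Aᵀw. Consequently the Lagrangian dual program max{⟨b,w⟩ : Aᵀw + y = c, y ∈ K*} has the same feasible slack vectors y as the program max{⟨d, c − y⟩ : By = Bc, My = Mc, y ∈ K*} when b = Ad. -/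
open Matrix

lemma key_dot {s q : ℕ} (N : Matrix (Fin s) (Fin q) ℝ) (w : Fin s → ℝ) (x : Fin q → ℝ) :
    (Nᵀ *ᵥ w) ⬝ᵥ x = w ⬝ᵥ (N *ᵥ x) := by
  rw [dotProduct_comm, dotProduct_mulVec, vecMul_transpose, dotProduct_comm]

/-- Equivalence of slack-vector descriptions of the standard and nonstandard duals. -/
theorem stmt_1
{q m l r : ℕ}
    (K : Set (Fin q → ℝ))
    (hKclosed : IsClosed K) (hKconv : Convex ℝ K)
    (hKcone : ∀ (t : ℝ), 0 ≤ t → ∀ x ∈ K, t • x ∈ K)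
    (A : Matrix (Fin m) (Fin q) ℝ)
    (B : Matrix (Fin l) (Fin q) ℝ)
    (M : Matrix (Fin r) (Fin q) ℝ)
(hAB : ∀ (w : Fin m → ℝ) (z : Fin l → ℝ), (Aᵀ *ᵥ w) ⬝ᵥ (Bᵀ *ᵥ z) = 0)
    (hAM : ∀ (w : Fin m → ℝ) (z : Fin r → ℝ), (Aᵀ *ᵥ w) ⬝ᵥ (Mᵀ *ᵥ z) = 0)
    (hBM : ∀ (w : Fin l → ℝ) (z : Fin r → ℝ), (Bᵀ *ᵥ w) ⬝ᵥ (Mᵀ *ᵥ z) = 0)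
    (hspan : ∀ x : Fin q → ℝ, ∃ (w₁ : Fin m → ℝ) (w₂ : Fin l → ℝ) (w₃ : Fin r → ℝ),
      x = Aᵀ *ᵥ w₁ + Bᵀ *ᵥ w₂ + Mᵀ *ᵥ w₃)
    (c d : Fin q → ℝ) (b : Fin m → ℝ) (hb : b = A *ᵥ d) :
    (∀ y ∈ {y : Fin q → ℝ | ∀ z ∈ K, 0 ≤ y ⬝ᵥ z},
      (B *ᵥ y = B *ᵥ c ∧ M *ᵥ y = M *ᵥ c) ↔ (∃ w : Fin m → ℝ, y = c - Aᵀ *ᵥ w)) ∧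
    {y : Fin q → ℝ | (∀ z ∈ K, 0 ≤ y ⬝ᵥ z) ∧ ∃ w : Fin m → ℝ, Aᵀ *ᵥ w + y = c} =
      {y : Fin q → ℝ | (∀ z ∈ K, 0 ≤ y ⬝ᵥ z) ∧ B *ᵥ y = B *ᵥ c ∧ M *ᵥ y = M *ᵥ c} := by
  -- B (Aᵀ w) = 0, M (Aᵀ w) = 0
  have hBA : ∀ w : Fin m → ℝ, B *ᵥ (Aᵀ *ᵥ w) = 0 := by
    intro w
    have h : (B *ᵥ (Aᵀ *ᵥ w)) ⬝ᵥ (B *ᵥ (Aᵀ *ᵥ w)) = 0 := by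
      have := key_dot B (B *ᵥ (Aᵀ *ᵥ w)) (Aᵀ *ᵥ w)
      rw [dotProduct_comm] at this
      rw [← this]; exact hAB _ _
    exact (dotProduct_self_eq_zero (R := ℝ)).mp h
  have hMA : ∀ w : Fin m → ℝ, M *ᵥ (Aᵀ *ᵥ w) = 0 := by
    intro w
    have h : (M *ᵥ (Aᵀ *ᵥ w)) ⬝ᵥ (M *ᵥ (Aᵀ *ᵥ w)) = 0 := by
      have := key_dot M (M *ᵥ (Aᵀ *ᵥ w)) (Aᵀ *ᵥ w)
      rw [dotProduct_comm] at this
      rw [← this]; exact hAM _ _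
    exact (dotProduct_self_eq_zero (R := ℝ)).mp h
  -- main equivalence (no reference to K needed)
  have main : ∀ y : Fin q → ℝ,
      (B *ᵥ y = B *ᵥ c ∧ M *ᵥ y = M *ᵥ c) ↔ (∃ w : Fin m → ℝ, y = c - Aᵀ *ᵥ w) := by
    intro y
    constructor
    · rintro ⟨hB, hM⟩
      obtain ⟨w₁, w₂, w₃, hx⟩ := hspan (y - c)
      have hBx : B *ᵥ (y - c) = 0 := by rw [mulVec_sub, hB, sub_self]
      have hMx : M *ᵥ (y - c) = 0 := by rw [mulVec_sub, hM, sub_self]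
      -- show Bᵀ w₂ = 0
      have hB2 : Bᵀ *ᵥ w₂ = 0 := by
        have h : (Bᵀ *ᵥ w₂) ⬝ᵥ (Bᵀ *ᵥ w₂) = 0 := by
          have e1 : (Bᵀ *ᵥ w₂) ⬝ᵥ (y - c) = 0 := by
            rw [key_dot, hBx, dotProduct_zero]
          rw [hx] at e1
          rw [dotProduct_add, dotProduct_add] at e1
          rw [dotProduct_comm _ (Aᵀ *ᵥ w₁), hAB, hBM] at e1
          linarith
        exact (dotProduct_self_eq_zero (R := ℝ)).mp h
      have hM3 : Mᵀ *ᵥ w₃ = 0 := by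
        have h : (Mᵀ *ᵥ w₃) ⬝ᵥ (Mᵀ *ᵥ w₃) = 0 := by
          have e1 : (Mᵀ *ᵥ w₃) ⬝ᵥ (y - c) = 0 := by
            rw [key_dot, hMx, dotProduct_zero]
          rw [hx] at e1
          rw [dotProduct_add, dotProduct_add] at e1
          rw [dotProduct_comm _ (Aᵀ *ᵥ w₁), hAM,
              dotProduct_comm _ (Bᵀ *ᵥ w₂), hBM] at e1
          linarith
        exact (dotProduct_self_eq_zero (R := ℝ)).mp h
      refine ⟨-w₁, ?_⟩
      have : y - c = Aᵀ *ᵥ w₁ := by rw [hx, hB2, hM3, add_zero, add_zero]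
      rw [mulVec_neg, sub_neg_eq_add]
      linear_combination (norm := (funext i; simp; ring_nf)) this
    · rintro ⟨w, rfl⟩
      constructor
      · rw [mulVec_sub, hBA, sub_zero]
      · rw [mulVec_sub, hMA, sub_zero]
  refine ⟨fun y _ => main y, ?_⟩
  ext y
  simp only [Set.mem_setOf_eq]
  constructor
  · rintro ⟨hK, w, hw⟩
    exact ⟨hK, (main y).mpr ⟨w, by rw [← hw]; abel⟩⟩
  · rintro ⟨hK, h⟩
    obtain ⟨w, hw⟩ := (main y).mp h
    exact ⟨hK, w, by rw [hw]; abel⟩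
end

section
/- Suppose b = Ad, a = Bc, and Assumption 1 holds. If x satisfies Ax = b, x ∈ K, y satisfies By = a, My = Mc, y ∈ K*, and ⟨c,x⟩ = ⟨d, c − y⟩, then ⟨x, y⟩ = 0. -/
open Matrix

/-- Zero duality gap implies complementary slackness. -/
theorem stmt_2
{q m l r : ℕ}
    (K : Set (Fin q → ℝ))
    (hKclosed : IsClosed K) (hKconv : Convex ℝ K)
    (hKcone : ∀ (t : ℝ), 0 ≤ t → ∀ x ∈ K, t • x ∈ K)
    (A : Matrix (Fin m) (Fin q) ℝ)
    (B : Matrix (Fin l) (Fin q) ℝ)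
    (M : Matrix (Fin r) (Fin q) ℝ)
(hAB : ∀ (w : Fin m → ℝ) (z : Fin l → ℝ), (Aᵀ *ᵥ w) ⬝ᵥ (Bᵀ *ᵥ z) = 0)
    (hAM : ∀ (w : Fin m → ℝ) (z : Fin r → ℝ), (Aᵀ *ᵥ w) ⬝ᵥ (Mᵀ *ᵥ z) = 0)
    (hBM : ∀ (w : Fin l → ℝ) (z : Fin r → ℝ), (Bᵀ *ᵥ w) ⬝ᵥ (Mᵀ *ᵥ z) = 0)
    (hspan : ∀ x : Fin q → ℝ, ∃ (w₁ : Fin m → ℝ) (w₂ : Fin l → ℝ) (w₃ : Fin r → ℝ),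
      x = Aᵀ *ᵥ w₁ + Bᵀ *ᵥ w₂ + Mᵀ *ᵥ w₃)
    (c d : Fin q → ℝ) (a : Fin l → ℝ) (b : Fin m → ℝ)
    (hb : b = A *ᵥ d) (ha : a = B *ᵥ c)
    (x y : Fin q → ℝ)
    (hx1 : A *ᵥ x = b) (hx2 : x ∈ K)
    (hy1 : B *ᵥ y = a) (hy2 : M *ᵥ y = M *ᵥ c)
    (hy3 : y ∈ {y : Fin q → ℝ | ∀ z ∈ K, 0 ≤ y ⬝ᵥ z})
    (hgap : c ⬝ᵥ x = d ⬝ᵥ (c - y)) :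
    x ⬝ᵥ y = 0 := by
  obtain ⟨w₁, w₂, w₃, hdec⟩ := hspan (y - c)
  have hB : B *ᵥ (y - c) = 0 := by
    rw [mulVec_sub, hy1, ha, sub_self]
  have hM : M *ᵥ (y - c) = 0 := by
    rw [mulVec_sub, hy2, sub_self]
  have hB2 : Bᵀ *ᵥ w₂ = 0 := by
    have h0 : (y - c) ⬝ᵥ (Bᵀ *ᵥ w₂) = 0 := by
      rw [dotProduct_mulVec, vecMul_transpose, hB, zero_dotProduct]
    rw [hdec, add_dotProduct, add_dotProduct, hAB w₁ w₂,
      dotProduct_comm (Mᵀ *ᵥ w₃), hBM w₂ w₃, add_zero, zero_add] at h0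
    exact (dotProduct_self_eq_zero).mp h0
  have hM2 : Mᵀ *ᵥ w₃ = 0 := by
    have h0 : (y - c) ⬝ᵥ (Mᵀ *ᵥ w₃) = 0 := by
      rw [dotProduct_mulVec, vecMul_transpose, hM, zero_dotProduct]
    rw [hdec, add_dotProduct, add_dotProduct, hAM w₁ w₃, hBM w₂ w₃,
      zero_add, zero_add] at h0
    exact (dotProduct_self_eq_zero).mp h0
  have hyc : y - c = Aᵀ *ᵥ w₁ := by rw [hdec, hB2, hM2, add_zero, add_zero]
  have hkey : x ⬝ᵥ (y - c) = d ⬝ᵥ (y - c) := by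
    rw [hyc, dotProduct_mulVec, vecMul_transpose, hx1, hb,
      ← vecMul_transpose, ← dotProduct_mulVec]
  have h1 : x ⬝ᵥ y = x ⬝ᵥ c + d ⬝ᵥ (y - c) := by
    rw [← hkey]; ring_nf; rw [dotProduct_sub]; ring
  rw [h1, dotProduct_comm x c, hgap, dotProduct_sub, dotProduct_sub]
  ring
end

section
/- Suppose d ∈ int(K) and Assumption 1 holds. Then there exists w¹ ∈ ℝ^l with d + Mᵀv + Bᵀw¹ ∈ int(K) if and only if v ∈ int(Θ_P), where Θ_P = {v ∈ ℝ^r : ∃w, d + Mᵀv + Bᵀw ∈ K}. -/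
open Matrix

/-- Strict feasibility characterizes the interior of Θ_P when d ∈ int(K). -/
theorem stmt_9
{q m l r : ℕ}
    (K : Set (Fin q → ℝ))
    (hKclosed : IsClosed K) (hKconv : Convex ℝ K)
    (hKcone : ∀ (t : ℝ), 0 ≤ t → ∀ x ∈ K, t • x ∈ K)
    (A : Matrix (Fin m) (Fin q) ℝ)
    (B : Matrix (Fin l) (Fin q) ℝ)
    (M : Matrix (Fin r) (Fin q) ℝ)
(hAB : ∀ (w : Fin m → ℝ) (z : Fin l → ℝ), (Aᵀ *ᵥ w) ⬝ᵥ (Bᵀ *ᵥ z) = 0)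
    (hAM : ∀ (w : Fin m → ℝ) (z : Fin r → ℝ), (Aᵀ *ᵥ w) ⬝ᵥ (Mᵀ *ᵥ z) = 0)
    (hBM : ∀ (w : Fin l → ℝ) (z : Fin r → ℝ), (Bᵀ *ᵥ w) ⬝ᵥ (Mᵀ *ᵥ z) = 0)
    (hspan : ∀ x : Fin q → ℝ, ∃ (w₁ : Fin m → ℝ) (w₂ : Fin l → ℝ) (w₃ : Fin r → ℝ),
      x = Aᵀ *ᵥ w₁ + Bᵀ *ᵥ w₂ + Mᵀ *ᵥ w₃)
    (hKpointed : K ∩ (-K) = {0}) (hKsolid : (interior K).Nonempty)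
    (d : Fin q → ℝ) (hd : d ∈ interior K) (v : Fin r → ℝ) :
    (∃ w₁ : Fin l → ℝ, d + Mᵀ *ᵥ v + Bᵀ *ᵥ w₁ ∈ interior K) ↔
    v ∈ interior {v : Fin r → ℝ | ∃ w : Fin l → ℝ, d + Mᵀ *ᵥ v + Bᵀ *ᵥ w ∈ K} := by

  constructor
  · rintro ⟨w₁, hw⟩
    have hcont : Continuous fun u : Fin r → ℝ => d + Mᵀ *ᵥ u + Bᵀ *ᵥ w₁ := by
      have h1 : Continuous fun u : Fin r → ℝ => Mᵀ *ᵥ u :=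
        (Matrix.mulVecLin Mᵀ).continuous_of_finiteDimensional
      exact (continuous_const.add h1).add continuous_const
    refine mem_interior.mpr ⟨(fun u => d + Mᵀ *ᵥ u + Bᵀ *ᵥ w₁) ⁻¹' interior K, ?_, ?_, ?_⟩
    · intro u hu; exact ⟨w₁, interior_subset hu⟩
    · exact isOpen_interior.preimage hcont
    · exact hw
  · intro hv
    have hmem : {v : Fin r → ℝ | ∃ w : Fin l → ℝ, d + Mᵀ *ᵥ v + Bᵀ *ᵥ w ∈ K} ∈ nhds v :=
      mem_interior_iff_mem_nhds.mp hv
    have htend : Filter.Tendsto (fun t : ℝ => v + t • v) (nhdsWithin 0 (Set.Ioi 0)) (nhds v) := by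
      have hc : Continuous fun t : ℝ => v + t • v := by continuity
      have : Filter.Tendsto (fun t : ℝ => v + t • v) (nhds 0) (nhds v) := by
        simpa using hc.tendsto 0
      exact this.mono_left nhdsWithin_le_nhds
    have hev : ∀ᶠ t in nhdsWithin (0:ℝ) (Set.Ioi 0),
        (v + t • v) ∈ {v : Fin r → ℝ | ∃ w : Fin l → ℝ, d + Mᵀ *ᵥ v + Bᵀ *ᵥ w ∈ K} :=
      htend.eventually_mem hmem
    obtain ⟨t, ht, hwt⟩ := (hev.and (eventually_mem_nhdsWithin)).exists
    obtain ⟨w, hw⟩ := ht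
    have htpos : (0:ℝ) < t := hwt
    have h1t : (0:ℝ) < 1 + t := by linarith
    refine ⟨(1/(1+t)) • w, ?_⟩
    have hcombo := hKconv.combo_interior_closure_mem_interior hd
      (subset_closure hw)
      (a := t/(1+t)) (b := 1/(1+t)) (by positivity) (by positivity) (by field_simp; try ring)
    have heq : (t/(1+t)) • d + (1/(1+t)) • (d + Mᵀ *ᵥ (v + t • v) + Bᵀ *ᵥ w)
        = d + Mᵀ *ᵥ v + Bᵀ *ᵥ ((1/(1+t)) • w) := by
      rw [Matrix.mulVec_add, Matrix.mulVec_smul, Matrix.mulVec_smul]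
      match_scalars <;> field_simp <;> ring
    rwa [heq] at hcombo
end

section
/- Suppose Assumptions 1, 2 hold, Ad = b, Bc = a. Let u, v ∈ ℝ^r, and suppose there exist x̄, ȳ ∈ ℝ^q satisfying the multiparametric KKT conditions: Ax̄ = b, Mx̄ = Md + v, x̄ ∈ K; Bȳ = a, Mȳ = Mc + u, ȳ ∈ K*; ⟨x̄, ȳ⟩ = 0. Then x̄ minimizes ⟨c + Mᵀu, x⟩ over {x ∈ K : Ax = b}, and ȳ minimizes ⟨d + Mᵀv, y⟩ over {y ∈ K* : By = a}. -/
open Matrix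

private lemma mv_apply {l q : ℕ} (B : Matrix (Fin l) (Fin q) ℝ) (x : Fin q → ℝ) (j : Fin l) :
    (B *ᵥ x) j = (Bᵀ *ᵥ Pi.single j 1) ⬝ᵥ x := by
  simp [Matrix.mulVec, dotProduct, Pi.single_apply, Finset.mul_sum]

private lemma tmv_dot {l q : ℕ} (B : Matrix (Fin l) (Fin q) ℝ) (w : Fin l → ℝ) (z : Fin q → ℝ) :
    (Bᵀ *ᵥ w) ⬝ᵥ z = w ⬝ᵥ (B *ᵥ z) := by
  rw [dotProduct_comm, Matrix.dotProduct_mulVec, Matrix.vecMul_transpose, dotProduct_comm]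

private lemma decomp {m l r q : ℕ}
    (A : Matrix (Fin m) (Fin q) ℝ) (B : Matrix (Fin l) (Fin q) ℝ) (M : Matrix (Fin r) (Fin q) ℝ)
    (hAB : ∀ (w : Fin m → ℝ) (z : Fin l → ℝ), (Aᵀ *ᵥ w) ⬝ᵥ (Bᵀ *ᵥ z) = 0)
    (hAM : ∀ (w : Fin m → ℝ) (z : Fin r → ℝ), (Aᵀ *ᵥ w) ⬝ᵥ (Mᵀ *ᵥ z) = 0)
    (hBM : ∀ (w : Fin l → ℝ) (z : Fin r → ℝ), (Bᵀ *ᵥ w) ⬝ᵥ (Mᵀ *ᵥ z) = 0)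
    (z : Fin q → ℝ)
    (hzdec : ∃ (w₁ : Fin m → ℝ) (w₂ : Fin l → ℝ) (w₃ : Fin r → ℝ),
      z = Aᵀ *ᵥ w₁ + Bᵀ *ᵥ w₂ + Mᵀ *ᵥ w₃)
    (hBz : B *ᵥ z = 0) (hMz : M *ᵥ z = 0) :
    ∃ p : Fin m → ℝ, z = Aᵀ *ᵥ p := by
  obtain ⟨w₁, w₂, w₃, hz⟩ := hzdec
  have h2 : (Bᵀ *ᵥ w₂) ⬝ᵥ z = 0 := by rw [tmv_dot, hBz, dotProduct_zero]
  have h3 : (Mᵀ *ᵥ w₃) ⬝ᵥ z = 0 := by rw [tmv_dot, hMz, dotProduct_zero]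
  have e2 : Bᵀ *ᵥ w₂ = 0 := by
    have : (Bᵀ *ᵥ w₂) ⬝ᵥ (Bᵀ *ᵥ w₂) = 0 := by
      have := h2
      rw [hz, dotProduct_add, dotProduct_add] at this
      rw [dotProduct_comm] at this
      rw [hAB w₁ w₂, hBM w₂ w₃] at this
      linarith [this]
    exact dotProduct_self_eq_zero.mp this
  have e3 : Mᵀ *ᵥ w₃ = 0 := by
    have : (Mᵀ *ᵥ w₃) ⬝ᵥ (Mᵀ *ᵥ w₃) = 0 := by
      have := h3
      rw [hz, dotProduct_add, dotProduct_add] at this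
      rw [dotProduct_comm (Mᵀ *ᵥ w₃) (Aᵀ *ᵥ w₁)] at this
      rw [dotProduct_comm (Mᵀ *ᵥ w₃) (Bᵀ *ᵥ w₂)] at this
      rw [hAM w₁ w₃, hBM w₂ w₃] at this
      linarith [this]
    exact dotProduct_self_eq_zero.mp this
  exact ⟨w₁, by rw [hz, e2, e3]; simp⟩

/-- The mpKKT conditions imply optimality for both perturbed problems. -/
theorem stmt_12
{q m l r : ℕ}
    (K : Set (Fin q → ℝ))
    (hKclosed : IsClosed K) (hKconv : Convex ℝ K)
    (hKcone : ∀ (t : ℝ), 0 ≤ t → ∀ x ∈ K, t • x ∈ K)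
    (A : Matrix (Fin m) (Fin q) ℝ)
    (B : Matrix (Fin l) (Fin q) ℝ)
    (M : Matrix (Fin r) (Fin q) ℝ)
(hAB : ∀ (w : Fin m → ℝ) (z : Fin l → ℝ), (Aᵀ *ᵥ w) ⬝ᵥ (Bᵀ *ᵥ z) = 0)
    (hAM : ∀ (w : Fin m → ℝ) (z : Fin r → ℝ), (Aᵀ *ᵥ w) ⬝ᵥ (Mᵀ *ᵥ z) = 0)
    (hBM : ∀ (w : Fin l → ℝ) (z : Fin r → ℝ), (Bᵀ *ᵥ w) ⬝ᵥ (Mᵀ *ᵥ z) = 0)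
    (hspan : ∀ x : Fin q → ℝ, ∃ (w₁ : Fin m → ℝ) (w₂ : Fin l → ℝ) (w₃ : Fin r → ℝ),
      x = Aᵀ *ᵥ w₁ + Bᵀ *ᵥ w₂ + Mᵀ *ᵥ w₃)
    (hMM : M * Mᵀ = 1)
    (c d : Fin q → ℝ) (a : Fin l → ℝ) (b : Fin m → ℝ)
    (hb : A *ᵥ d = b) (ha : B *ᵥ c = a)
    (u v : Fin r → ℝ) (xbar ybar : Fin q → ℝ)
    (hx1 : A *ᵥ xbar = b) (hx2 : M *ᵥ xbar = M *ᵥ d + v) (hx3 : xbar ∈ K)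
    (hy1 : B *ᵥ ybar = a) (hy2 : M *ᵥ ybar = M *ᵥ c + u)
    (hy3 : ybar ∈ {y : Fin q → ℝ | ∀ z ∈ K, 0 ≤ y ⬝ᵥ z})
    (hcs : xbar ⬝ᵥ ybar = 0) :
    (∀ x ∈ K, A *ᵥ x = b → (c + Mᵀ *ᵥ u) ⬝ᵥ xbar ≤ (c + Mᵀ *ᵥ u) ⬝ᵥ x) ∧
    (∀ y ∈ {y : Fin q → ℝ | ∀ z ∈ K, 0 ≤ y ⬝ᵥ z}, B *ᵥ y = a →
      (d + Mᵀ *ᵥ v) ⬝ᵥ ybar ≤ (d + Mᵀ *ᵥ v) ⬝ᵥ y) := by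
  have hBMt : ∀ w : Fin r → ℝ, B *ᵥ (Mᵀ *ᵥ w) = 0 := by
    intro w; funext j
    rw [mv_apply]
    simpa using hBM (Pi.single j 1) w
  have hAMt : ∀ w : Fin r → ℝ, A *ᵥ (Mᵀ *ᵥ w) = 0 := by
    intro w; funext j
    rw [mv_apply]
    simpa using hAM (Pi.single j 1) w
  have hMMt : ∀ w : Fin r → ℝ, M *ᵥ (Mᵀ *ᵥ w) = w := by
    intro w; rw [Matrix.mulVec_mulVec, hMM, Matrix.one_mulVec]
  constructor
  · -- first problem
    have hBz : B *ᵥ (ybar - (c + Mᵀ *ᵥ u)) = 0 := by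
      rw [Matrix.mulVec_sub, Matrix.mulVec_add, hy1, ha, hBMt]
      abel
    have hMz : M *ᵥ (ybar - (c + Mᵀ *ᵥ u)) = 0 := by
      rw [Matrix.mulVec_sub, Matrix.mulVec_add, hy2, hMMt]
      abel
    obtain ⟨p, hp⟩ := decomp A B M hAB hAM hBM _ (hspan _) hBz hMz
    have hc : c + Mᵀ *ᵥ u = ybar - Aᵀ *ᵥ p := by rw [← hp]; abel
    have key : ∀ x : Fin q → ℝ, A *ᵥ x = b →
        (c + Mᵀ *ᵥ u) ⬝ᵥ x = ybar ⬝ᵥ x - p ⬝ᵥ b := by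
      intro x hx
      rw [hc, sub_dotProduct, tmv_dot, hx]
    intro x hxK hx
    rw [key x hx, key xbar hx1]
    have h1 : ybar ⬝ᵥ xbar = 0 := by rw [dotProduct_comm]; exact hcs
    have h2 : 0 ≤ ybar ⬝ᵥ x := hy3 x hxK
    linarith
  · -- second problem
    have hAw : A *ᵥ (xbar - (d + Mᵀ *ᵥ v)) = 0 := by
      rw [Matrix.mulVec_sub, Matrix.mulVec_add, hx1, hb, hAMt]
      abel
    have hMw : M *ᵥ (xbar - (d + Mᵀ *ᵥ v)) = 0 := by
      rw [Matrix.mulVec_sub, Matrix.mulVec_add, hx2, hMMt]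
      abel
    have hBA : ∀ (w : Fin l → ℝ) (z : Fin m → ℝ), (Bᵀ *ᵥ w) ⬝ᵥ (Aᵀ *ᵥ z) = 0 := by
      intro w z; rw [dotProduct_comm]; exact hAB z w
    have hdec : ∃ (w₁ : Fin l → ℝ) (w₂ : Fin m → ℝ) (w₃ : Fin r → ℝ),
        xbar - (d + Mᵀ *ᵥ v) = Bᵀ *ᵥ w₁ + Aᵀ *ᵥ w₂ + Mᵀ *ᵥ w₃ := by
      obtain ⟨w₁, w₂, w₃, h⟩ := hspan (xbar - (d + Mᵀ *ᵥ v))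
      exact ⟨w₂, w₁, w₃, by rw [h]; abel⟩
    obtain ⟨t, ht⟩ := decomp B A M hBA hBM hAM _ hdec hAw hMw
    have hd : d + Mᵀ *ᵥ v = xbar - Bᵀ *ᵥ t := by rw [← ht]; abel
    have key : ∀ y : Fin q → ℝ, B *ᵥ y = a →
        (d + Mᵀ *ᵥ v) ⬝ᵥ y = xbar ⬝ᵥ y - t ⬝ᵥ a := by
      intro y hy
      rw [hd, sub_dotProduct, tmv_dot, hy]
    intro y hyK hy
    rw [key y hy, key ybar hy1]
    have h1 : xbar ⬝ᵥ ybar = 0 := hcs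
    have h2 : 0 ≤ xbar ⬝ᵥ y := by rw [dotProduct_comm]; exact hyK xbar hx3
    linarith
end

section
/- Suppose Assumptions 1, 2 hold, Ad = b, Bc = a, and (x̄, ȳ) satisfy the mpKKT conditions: Ax̄ = b, Mx̄ = Md + v, x̄ ∈ K; Bȳ = a, Mȳ = Mc + u, ȳ ∈ K*; ⟨x̄, ȳ⟩ = 0. Then ⟨c + Mᵀu, x̄⟩ + ⟨d + Mᵀv, ȳ⟩ = ⟨c + Mᵀu, d + Mᵀv⟩. -/
open Matrix

lemma aux_entry {m q : ℕ} (A : Matrix (Fin m) (Fin q) ℝ) (y : Fin q → ℝ) (i : Fin m) :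
    (A *ᵥ y) i = (Aᵀ *ᵥ Pi.single i 1) ⬝ᵥ y := by
  simp [mulVec, dotProduct, Matrix.transpose_apply, Pi.single_apply]

lemma killAM {m l r q : ℕ}
    (A : Matrix (Fin m) (Fin q) ℝ)
    (B : Matrix (Fin l) (Fin q) ℝ)
    (M : Matrix (Fin r) (Fin q) ℝ)
    (hAB : ∀ (w : Fin m → ℝ) (z : Fin l → ℝ), (Aᵀ *ᵥ w) ⬝ᵥ (Bᵀ *ᵥ z) = 0)
    (hAM : ∀ (w : Fin m → ℝ) (z : Fin r → ℝ), (Aᵀ *ᵥ w) ⬝ᵥ (Mᵀ *ᵥ z) = 0)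
    (hBM : ∀ (w : Fin l → ℝ) (z : Fin r → ℝ), (Bᵀ *ᵥ w) ⬝ᵥ (Mᵀ *ᵥ z) = 0)
    (hspan : ∀ x : Fin q → ℝ, ∃ (w₁ : Fin m → ℝ) (w₂ : Fin l → ℝ) (w₃ : Fin r → ℝ),
      x = Aᵀ *ᵥ w₁ + Bᵀ *ᵥ w₂ + Mᵀ *ᵥ w₃)
    (x : Fin q → ℝ) (hA : A *ᵥ x = 0) (hM : M *ᵥ x = 0) :
    ∃ w : Fin l → ℝ, x = Bᵀ *ᵥ w := by
  obtain ⟨w₁, w₂, w₃, h⟩ := hspan x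
  have key : ∀ (P : Matrix (Fin q) (Fin m) ℝ), True := fun _ => trivial
  have h1 : Aᵀ *ᵥ w₁ = 0 := by
    have e1 : (Aᵀ *ᵥ w₁) ⬝ᵥ x = (Aᵀ *ᵥ w₁) ⬝ᵥ (Aᵀ *ᵥ w₁) := by
      rw [h]
      simp [dotProduct_add, hAB, hAM]
    have e2 : (Aᵀ *ᵥ w₁) ⬝ᵥ x = 0 := by
      rw [dotProduct_comm, dotProduct_mulVec, vecMul_transpose, hA, zero_dotProduct]
    have : (Aᵀ *ᵥ w₁) ⬝ᵥ (Aᵀ *ᵥ w₁) = 0 := by rw [← e1, e2]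
    exact dotProduct_self_eq_zero.mp this
  have h3 : Mᵀ *ᵥ w₃ = 0 := by
    have e1 : (Mᵀ *ᵥ w₃) ⬝ᵥ x = (Mᵀ *ᵥ w₃) ⬝ᵥ (Mᵀ *ᵥ w₃) := by
      rw [h]
      have c1 : (Mᵀ *ᵥ w₃) ⬝ᵥ (Aᵀ *ᵥ w₁) = 0 := by rw [dotProduct_comm]; exact hAM _ _
      have c2 : (Mᵀ *ᵥ w₃) ⬝ᵥ (Bᵀ *ᵥ w₂) = 0 := by rw [dotProduct_comm]; exact hBM _ _
      simp [dotProduct_add, c1, c2]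
    have e2 : (Mᵀ *ᵥ w₃) ⬝ᵥ x = 0 := by
      rw [dotProduct_comm, dotProduct_mulVec, vecMul_transpose, hM, zero_dotProduct]
    have : (Mᵀ *ᵥ w₃) ⬝ᵥ (Mᵀ *ᵥ w₃) = 0 := by rw [← e1, e2]
    exact dotProduct_self_eq_zero.mp this
  exact ⟨w₂, by rw [h, h1, h3]; simp⟩

/-- Under the mpKKT conditions the objective values sum to the bilinear form. -/
theorem stmt_13
{q m l r : ℕ}
    (K : Set (Fin q → ℝ))
    (hKclosed : IsClosed K) (hKconv : Convex ℝ K)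
    (hKcone : ∀ (t : ℝ), 0 ≤ t → ∀ x ∈ K, t • x ∈ K)
    (A : Matrix (Fin m) (Fin q) ℝ)
    (B : Matrix (Fin l) (Fin q) ℝ)
    (M : Matrix (Fin r) (Fin q) ℝ)
(hAB : ∀ (w : Fin m → ℝ) (z : Fin l → ℝ), (Aᵀ *ᵥ w) ⬝ᵥ (Bᵀ *ᵥ z) = 0)
    (hAM : ∀ (w : Fin m → ℝ) (z : Fin r → ℝ), (Aᵀ *ᵥ w) ⬝ᵥ (Mᵀ *ᵥ z) = 0)
    (hBM : ∀ (w : Fin l → ℝ) (z : Fin r → ℝ), (Bᵀ *ᵥ w) ⬝ᵥ (Mᵀ *ᵥ z) = 0)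
    (hspan : ∀ x : Fin q → ℝ, ∃ (w₁ : Fin m → ℝ) (w₂ : Fin l → ℝ) (w₃ : Fin r → ℝ),
      x = Aᵀ *ᵥ w₁ + Bᵀ *ᵥ w₂ + Mᵀ *ᵥ w₃)
    (hMM : M * Mᵀ = 1)
    (c d : Fin q → ℝ) (a : Fin l → ℝ) (b : Fin m → ℝ)
    (hb : A *ᵥ d = b) (ha : B *ᵥ c = a)
    (u v : Fin r → ℝ) (xbar ybar : Fin q → ℝ)
    (hx1 : A *ᵥ xbar = b) (hx2 : M *ᵥ xbar = M *ᵥ d + v) (hx3 : xbar ∈ K)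
    (hy1 : B *ᵥ ybar = a) (hy2 : M *ᵥ ybar = M *ᵥ c + u)
    (hy3 : ybar ∈ {y : Fin q → ℝ | ∀ z ∈ K, 0 ≤ y ⬝ᵥ z})
    (hcs : xbar ⬝ᵥ ybar = 0) :
    (c + Mᵀ *ᵥ u) ⬝ᵥ xbar + (d + Mᵀ *ᵥ v) ⬝ᵥ ybar = (c + Mᵀ *ᵥ u) ⬝ᵥ (d + Mᵀ *ᵥ v) := by
  have hAMt : ∀ z : Fin r → ℝ, A *ᵥ (Mᵀ *ᵥ z) = 0 := by
    intro z; funext i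
    rw [aux_entry]
    simpa using hAM (Pi.single i 1) z
  have hBMt : ∀ z : Fin r → ℝ, B *ᵥ (Mᵀ *ᵥ z) = 0 := by
    intro z; funext i
    rw [aux_entry]
    simpa using hBM (Pi.single i 1) z
  have hMMt : ∀ z : Fin r → ℝ, M *ᵥ (Mᵀ *ᵥ z) = z := by
    intro z; rw [mulVec_mulVec, hMM, one_mulVec]
  -- x-part
  obtain ⟨wx, hwx⟩ := killAM A B M hAB hAM hBM hspan (xbar - (d + Mᵀ *ᵥ v))
    (by simp [mulVec_sub, mulVec_add, hx1, ← hb, hAMt])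
    (by simp [mulVec_sub, mulVec_add, hx2, hMMt])
  -- y-part : swap roles of A and B
  have hBA : ∀ (w : Fin l → ℝ) (z : Fin m → ℝ), (Bᵀ *ᵥ w) ⬝ᵥ (Aᵀ *ᵥ z) = 0 := by
    intro w z; rw [dotProduct_comm]; exact hAB z w
  have hspan' : ∀ x : Fin q → ℝ, ∃ (w₁ : Fin l → ℝ) (w₂ : Fin m → ℝ) (w₃ : Fin r → ℝ),
      x = Bᵀ *ᵥ w₁ + Aᵀ *ᵥ w₂ + Mᵀ *ᵥ w₃ := by
    intro x
    obtain ⟨w₁, w₂, w₃, h⟩ := hspan x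
    exact ⟨w₂, w₁, w₃, by rw [h]; abel⟩
  obtain ⟨wy, hwy⟩ := killAM B A M hBA hBM hAM hspan' (ybar - (c + Mᵀ *ᵥ u))
    (by simp [mulVec_sub, mulVec_add, hy1, ← ha, hBMt])
    (by simp [mulVec_sub, mulVec_add, hy2, hMMt])
  have horth : (xbar - (d + Mᵀ *ᵥ v)) ⬝ᵥ (ybar - (c + Mᵀ *ᵥ u)) = 0 := by
    rw [hwx, hwy, dotProduct_comm]
    exact hAB _ _
  have hexp := horth
  simp only [sub_dotProduct, dotProduct_sub, hcs] at hexp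
  rw [dotProduct_comm (c + Mᵀ *ᵥ u) xbar, dotProduct_comm (c + Mᵀ *ᵥ u) (d + Mᵀ *ᵥ v)]
  linarith
end

section
/- Suppose Assumptions 1 and 2 hold, Ad = b, Bc = a. For any x with Ax = b, Mx = Md + v, x ∈ K and any y with By = a, My = Mc + u, y ∈ K*, one has ⟨c, d + Mᵀv − x⟩ + ⟨d, c + Mᵀu − y⟩ ≤ ⟨c + Mᵀu, d + Mᵀv⟩, with equality if and only if ⟨x, y⟩ = 0. -/
open Matrix

/-- Weak duality for the almost primal-dual pair of RHS-perturbed problems. -/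
theorem stmt_14
{q m l r : ℕ}
    (K : Set (Fin q → ℝ))
    (hKclosed : IsClosed K) (hKconv : Convex ℝ K)
    (hKcone : ∀ (t : ℝ), 0 ≤ t → ∀ x ∈ K, t • x ∈ K)
    (A : Matrix (Fin m) (Fin q) ℝ)
    (B : Matrix (Fin l) (Fin q) ℝ)
    (M : Matrix (Fin r) (Fin q) ℝ)
(hAB : ∀ (w : Fin m → ℝ) (z : Fin l → ℝ), (Aᵀ *ᵥ w) ⬝ᵥ (Bᵀ *ᵥ z) = 0)
    (hAM : ∀ (w : Fin m → ℝ) (z : Fin r → ℝ), (Aᵀ *ᵥ w) ⬝ᵥ (Mᵀ *ᵥ z) = 0)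
    (hBM : ∀ (w : Fin l → ℝ) (z : Fin r → ℝ), (Bᵀ *ᵥ w) ⬝ᵥ (Mᵀ *ᵥ z) = 0)
    (hspan : ∀ x : Fin q → ℝ, ∃ (w₁ : Fin m → ℝ) (w₂ : Fin l → ℝ) (w₃ : Fin r → ℝ),
      x = Aᵀ *ᵥ w₁ + Bᵀ *ᵥ w₂ + Mᵀ *ᵥ w₃)
    (hMM : M * Mᵀ = 1)
    (c d : Fin q → ℝ) (a : Fin l → ℝ) (b : Fin m → ℝ)
    (hb : A *ᵥ d = b) (ha : B *ᵥ c = a)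
    (u v : Fin r → ℝ) (x y : Fin q → ℝ)
    (hx1 : A *ᵥ x = b) (hx2 : M *ᵥ x = M *ᵥ d + v) (hx3 : x ∈ K)
    (hy1 : B *ᵥ y = a) (hy2 : M *ᵥ y = M *ᵥ c + u)
    (hy3 : y ∈ {y : Fin q → ℝ | ∀ z ∈ K, 0 ≤ y ⬝ᵥ z}) :
    c ⬝ᵥ (d + Mᵀ *ᵥ v - x) + d ⬝ᵥ (c + Mᵀ *ᵥ u - y) ≤ (c + Mᵀ *ᵥ u) ⬝ᵥ (d + Mᵀ *ᵥ v) ∧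
    (c ⬝ᵥ (d + Mᵀ *ᵥ v - x) + d ⬝ᵥ (c + Mᵀ *ᵥ u - y) = (c + Mᵀ *ᵥ u) ⬝ᵥ (d + Mᵀ *ᵥ v) ↔
      x ⬝ᵥ y = 0) := by

  classical
  -- orthogonality in mulVec form
  have hMA : ∀ w : Fin m → ℝ, M *ᵥ (Aᵀ *ᵥ w) = 0 := by
    intro w
    funext i
    have h := hAM w (Pi.single i 1)
    have : (Mᵀ *ᵥ Pi.single i 1) ⬝ᵥ (Aᵀ *ᵥ w) = 0 := by
      rw [dotProduct_comm]; exact h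
    rw [Matrix.mulVec_transpose, ← Matrix.dotProduct_mulVec] at this
    simpa using this
  have hMB : ∀ w : Fin l → ℝ, M *ᵥ (Bᵀ *ᵥ w) = 0 := by
    intro w
    funext i
    have h := hBM w (Pi.single i 1)
    have : (Mᵀ *ᵥ Pi.single i 1) ⬝ᵥ (Bᵀ *ᵥ w) = 0 := by
      rw [dotProduct_comm]; exact h
    rw [Matrix.mulVec_transpose, ← Matrix.dotProduct_mulVec] at this
    simpa using this
  have hMMv : ∀ z : Fin r → ℝ, M *ᵥ (Mᵀ *ᵥ z) = z := by
    intro z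
    rw [Matrix.mulVec_mulVec, hMM, Matrix.one_mulVec]
  have hMtMt : ∀ (z w : Fin r → ℝ), (Mᵀ *ᵥ z) ⬝ᵥ (Mᵀ *ᵥ w) = z ⬝ᵥ w := by
    intro z w
    rw [Matrix.mulVec_transpose, ← Matrix.dotProduct_mulVec, hMMv]
  set s := x - d with hs
  set t := y - c with ht
  have hAs : A *ᵥ s = 0 := by
    rw [hs, Matrix.mulVec_sub, hx1, hb, sub_self]
  have hBt : B *ᵥ t = 0 := by
    rw [ht, Matrix.mulVec_sub, hy1, ha, sub_self]
  have hMs : M *ᵥ s = v := by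
    rw [hs, Matrix.mulVec_sub, hx2]; abel
  have hMt : M *ᵥ t = u := by
    rw [ht, Matrix.mulVec_sub, hy2]; abel
  obtain ⟨p₁, p₂, p₃, hp⟩ := hspan s
  obtain ⟨q₁, q₂, q₃, hq⟩ := hspan t
  have hAp : Aᵀ *ᵥ p₁ = 0 := by
    have h1 : (Aᵀ *ᵥ p₁) ⬝ᵥ s = (Aᵀ *ᵥ p₁) ⬝ᵥ (Aᵀ *ᵥ p₁) := by
      rw [hp, dotProduct_add, dotProduct_add, hAB, hAM, add_zero, add_zero]
    have h2 : (Aᵀ *ᵥ p₁) ⬝ᵥ s = 0 := by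
      rw [Matrix.mulVec_transpose, ← Matrix.dotProduct_mulVec, hAs, dotProduct_zero]
    rw [h2] at h1
    exact (dotProduct_self_eq_zero.mp h1.symm)
  have hBq : Bᵀ *ᵥ q₂ = 0 := by
    have h1 : (Bᵀ *ᵥ q₂) ⬝ᵥ t = (Bᵀ *ᵥ q₂) ⬝ᵥ (Bᵀ *ᵥ q₂) := by
      rw [hq, dotProduct_add, dotProduct_add, hBM, add_zero]
      rw [dotProduct_comm _ (Aᵀ *ᵥ q₁), hAB, zero_add]
    have h2 : (Bᵀ *ᵥ q₂) ⬝ᵥ t = 0 := by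
      rw [Matrix.mulVec_transpose, ← Matrix.dotProduct_mulVec, hBt, dotProduct_zero]
    rw [h2] at h1
    exact (dotProduct_self_eq_zero.mp h1.symm)
  have hp3 : p₃ = v := by
    have := hMs
    rw [hp, Matrix.mulVec_add, Matrix.mulVec_add, hMA, hMB, hMMv, zero_add, zero_add] at this
    exact this
  have hq3 : q₃ = u := by
    have := hMt
    rw [hq, Matrix.mulVec_add, Matrix.mulVec_add, hMA, hMB, hMMv, zero_add, zero_add] at this
    exact this
  -- key: s ⬝ᵥ t = v ⬝ᵥ u
  have hBA : ∀ w : Fin m → ℝ, B *ᵥ (Aᵀ *ᵥ w) = 0 := by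
    intro w
    funext i
    have h := hAB w (Pi.single i 1)
    have h2 : (Bᵀ *ᵥ Pi.single i 1) ⬝ᵥ (Aᵀ *ᵥ w) = 0 := by
      rw [dotProduct_comm]; exact h
    rw [Matrix.mulVec_transpose, ← Matrix.dotProduct_mulVec] at h2
    simpa using h2
  have hst : s ⬝ᵥ t = v ⬝ᵥ u
  · rw [hp, hq, hAp, hBq, zero_add, add_zero]
    rw [dotProduct_add, add_dotProduct, add_dotProduct]
    rw [dotProduct_comm (Mᵀ *ᵥ p₃) (Aᵀ *ᵥ q₁), hAM, hBM, hMtMt, hp3, hq3]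
    rw [Matrix.mulVec_transpose, ← Matrix.dotProduct_mulVec, hBA, dotProduct_zero]
    ring
  -- main identity
  have hkey : (c + Mᵀ *ᵥ u) ⬝ᵥ (d + Mᵀ *ᵥ v)
      = c ⬝ᵥ (d + Mᵀ *ᵥ v - x) + d ⬝ᵥ (c + Mᵀ *ᵥ u - y) + x ⬝ᵥ y
  · have hxy : x ⬝ᵥ y = s ⬝ᵥ t + s ⬝ᵥ c + d ⬝ᵥ t + d ⬝ᵥ c := by
      have : x ⬝ᵥ y = (s + d) ⬝ᵥ (t + c) := by
        rw [hs, ht]; congr 1 <;> abel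
      rw [this, add_dotProduct, dotProduct_add, dotProduct_add]; ring
    have hMuv := hMtMt u v
    have hsc : s ⬝ᵥ c = x ⬝ᵥ c - d ⬝ᵥ c := by rw [hs, sub_dotProduct]
    have hdt : d ⬝ᵥ t = d ⬝ᵥ y - d ⬝ᵥ c := by rw [ht, dotProduct_sub]
    have huv := dotProduct_comm u v
    have e1 := dotProduct_comm c d
    have e2 := dotProduct_comm (Mᵀ *ᵥ u) d
    have hcx := dotProduct_comm c x
    have hdc := dotProduct_comm d c
    simp only [dotProduct_add, add_dotProduct, dotProduct_sub, hxy] at *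
    linarith
  have hxy0 : 0 ≤ x ⬝ᵥ y := by
    rw [dotProduct_comm]; exact hy3 x hx3
  constructor
  · linarith [hkey, hxy0]
  · constructor
    · intro h; linarith [hkey]
    · intro h; linarith [hkey]
end
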